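/- arXiv:1509.06829 — 3 statements merged into one kernel-verified Lean document; each statement's English description precedes it below -/
import Mathlib

section
/- Let C be the ℤ_4-linear code of length 3 generated by {(1,1,1),(0,0,2),(0,2,0)} over ℤ_4. Then C has exactly 16 codewords, is self-complementary (closed under adding (1,1,1)), and every pair of distinct codewords (with representatives in {0,1,2,3}^3 ⊂ ℤ^3) has asymmetric distance Δ ≥ 2. -/
def asymN {n : ℕ} (x y : Fin n → ℤ) : ℤ := ∑ i, max (y i - x i) 0

def asymDelta {n : ℕ} (x y : Fin n → ℤ) : ℤ := max (asymN x y) (asymN y x)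

/-- Integer lift of a `ZMod q` codeword. -/
def liftWord {q n : ℕ} (c : Fin n → ZMod q) : Fin n → ℤ := fun i => ((c i).val : ℤ)

/-!
The code consists exactly of the words of `(ℤ/4)³` whose three coordinates have the same parity:
a coordinate constant `a` plus even corrections `2b`, `2c` in two positions. Counting such words
gives 16, and adding `(1,1,1)` flips all three parities at once. For two distinct such words the
integer differences `yᵢ - xᵢ` of their lifts again share one parity. If it is odd, every
coordinate contributes at least 1 to `N(x,y) + N(y,x) = ∑ |yᵢ - xᵢ| ≥ 3`, so the larger of the two
is at least 2; if it is even, some nonzero difference has absolute value at least 2 and sits in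
one of the two sums on its own.
-/

theorem asymN_add_asymN {n : ℕ} (x y : Fin n → ℤ) :
    asymN x y + asymN y x = ∑ i, |y i - x i| := by
  rw [asymN, asymN, ← Finset.sum_add_distrib]
  refine Finset.sum_congr rfl fun i _ => ?_
  simpa only [neg_sub] using max_zero_add_max_neg_zero_eq_abs_self (y i - x i)

theorem two_le_asymDelta_of_emod_two_eq {n : ℕ} (hn : 3 ≤ n) {x y : Fin n → ℤ} (hxy : x ≠ y)
    (hpar : ∀ i j, (y i - x i) % 2 = (y j - x j) % 2) : 2 ≤ asymDelta x y := by
  obtain ⟨k, hk⟩ : ∃ k, x k ≠ y k := Function.ne_iff.mp hxy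
  have hle : ∀ {f : Fin n → ℤ}, (∀ i, 0 ≤ f i) → f k ≤ ∑ i, f i := fun hf =>
    Finset.single_le_sum (fun i _ => hf i) (Finset.mem_univ k)
  have hpos : max (y k - x k) 0 ≤ asymN x y := hle fun _ => le_max_right _ _
  have hneg : max (x k - y k) 0 ≤ asymN y x := hle fun _ => le_max_right _ _
  rw [asymDelta]
  by_cases hodd : (y k - x k) % 2 = 1
  · have hsum : (n : ℤ) ≤ asymN x y + asymN y x := by
      rw [asymN_add_asymN]
      calc (n : ℤ) = ∑ _i : Fin n, 1 := by simp
        _ ≤ ∑ i, |y i - x i| := Finset.sum_le_sum fun i _ => by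
          have := hpar i k
          exact Int.one_le_abs (by omega)
    omega
  · omega

theorem liftWord_injective {q n : ℕ} [NeZero q] :
    Function.Injective (liftWord : (Fin n → ZMod q) → Fin n → ℤ) := fun _ _ h =>
  funext fun i => ZMod.val_injective q (Nat.cast_injective (congrFun h i))

def parity : ZMod 4 →+* ZMod 2 := ZMod.castHom (by norm_num) (ZMod 2)

def SameParity {n : ℕ} (x : Fin n → ZMod 4) : Prop := ∀ i j, parity (x i) = parity (x j)

instance {n : ℕ} : DecidablePred (SameParity (n := n)) := fun _ => by
  unfold SameParity; infer_instance

theorem SameParity.add_one {n : ℕ} {x : Fin n → ZMod 4} (hx : SameParity x) :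
    SameParity (x + fun _ => 1) := fun i j => by
  simp only [Pi.add_apply, map_add, hx i j]

theorem SameParity.liftWord_emod_two {n : ℕ} {x : Fin n → ZMod 4} (hx : SameParity x)
    (i j : Fin n) : liftWord x i % 2 = liftWord x j % 2 := by
  have h := hx i j
  simp only [parity, ZMod.castHom_apply, ZMod.cast_eq_val] at h
  exact_mod_cast (ZMod.intCast_eq_intCast_iff' _ _ 2).mp (by exact_mod_cast h)

theorem parity_eq_iff_exists_add_two_mul (a b : ZMod 4) :
    parity a = parity b ↔ ∃ k, b = a + 2 * k := by
  revert a b; decide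

theorem mem_span_iff_sameParity (x : Fin 3 → ZMod 4) :
    x ∈ Submodule.span (ZMod 4) ({![1,1,1], ![0,0,2], ![0,2,0]} : Set (Fin 3 → ZMod 4)) ↔
      SameParity x := by
  rw [Submodule.mem_span_triple]
  constructor
  · rintro ⟨a, b, c, rfl⟩ i j
    have h2 : parity 2 = 0 := rfl
    fin_cases i <;> fin_cases j <;> simp [h2]
  · intro hx
    obtain ⟨c, hc⟩ := (parity_eq_iff_exists_add_two_mul _ _).mp (hx 0 1)
    obtain ⟨b, hb⟩ := (parity_eq_iff_exists_add_two_mul _ _).mp (hx 0 2)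
    refine ⟨x 0, b, c, funext fun i => ?_⟩
    fin_cases i <;> simp [hb, hc, mul_comm]

theorem stmt_10 :
    let C := Submodule.span (ZMod 4)
      ({![1,1,1], ![0,0,2], ![0,2,0]} : Set (Fin 3 → ZMod 4))
    Set.ncard (C : Set (Fin 3 → ZMod 4)) = 16 ∧
    (∀ x ∈ C, (x + fun _ => 1) ∈ C) ∧
    (∀ c ∈ C, ∀ d ∈ C, c ≠ d → 2 ≤ asymDelta (liftWord c) (liftWord d)) := by
  intro C
  have hmem : ∀ x, x ∈ C ↔ SameParity x := mem_span_iff_sameParity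
  refine ⟨?_, fun x hx => (hmem _).2 ((hmem x).1 hx).add_one, fun c hc d hd hcd => ?_⟩
  · have hC : (C : Set (Fin 3 → ZMod 4)) = ↑(Finset.univ.filter (SameParity (n := 3))) := by
      ext x; simp [hmem]
    rw [hC, Set.ncard_coe_finset]
    decide
  · rw [hmem] at hc hd
    refine two_le_asymDelta_of_emod_two_eq le_rfl (liftWord_injective.ne hcd) fun i j => ?_
    have hci := hc.liftWord_emod_two i j
    have hdi := hd.liftWord_emod_two i j
    omega
end

section
/- The ternary code C_{0'} of length 5 generated over ℤ_3 by {(0,0,0,1,1),(0,1,2,0,1),(1,1,1,1,1)} has 27 codewords, is self-complementary, and any two distinct codewords (with representatives in {0,1,2}^5 ⊂ ℤ^5) are at asymmetric distance Δ ≥ 2. -/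
lemma max_add_max_le_asymN {n : ℕ} (x y : Fin n → ℤ) {i j : Fin n} (hij : i ≠ j) :
    max (y i - x i) 0 + max (y j - x j) 0 ≤ asymN x y := by
  rw [← Finset.sum_pair (f := fun k => max (y k - x k) 0) hij]
  exact Finset.sum_le_sum_of_subset_of_nonneg (Finset.subset_univ _)
    fun _ _ _ => le_max_right _ _

lemma two_le_asymDelta_of_modEq {n : ℕ} {m : ℤ} (hm : 3 ≤ m) {x y : Fin n → ℤ} {i j : Fin n}
    (hij : i ≠ j) (hi : x i ≠ y i) (hmod : y i - x i ≡ y j - x j [ZMOD m]) :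
    2 ≤ asymDelta x y := by
  have hxy := max_add_max_le_asymN x y hij
  have hyx := max_add_max_le_asymN y x hij
  obtain ⟨k, hk⟩ := Int.modEq_iff_dvd.1 hmod
  have hmk : m * k = 0 ∨ m ≤ m * k ∨ m * k ≤ -m := by
    rcases lt_trichotomy k 0 with h | h | h
    · exact Or.inr (Or.inr (by nlinarith))
    · exact Or.inl (by simp [h])
    · exact Or.inr (Or.inl (by nlinarith))
  unfold asymDelta
  omega

lemma cast_liftWord {q n : ℕ} [NeZero q] (c : Fin n → ZMod q) (i : Fin n) :
    ((liftWord c i : ℤ) : ZMod q) = c i := by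
  simp [liftWord]

lemma two_le_asymDelta_liftWord {q n : ℕ} (hq : 3 ≤ q) {c d : Fin n → ZMod q} {i j : Fin n}
    (hij : i ≠ j) (hi : c i ≠ d i) (h : d i - c i = d j - c j) :
    2 ≤ asymDelta (liftWord c) (liftWord d) := by
  have : NeZero q := ⟨by omega⟩
  refine two_le_asymDelta_of_modEq (m := q) (by exact_mod_cast hq) hij ?_ ?_
  · exact fun h => hi (ZMod.val_injective q (Nat.cast_injective h))
  · rw [← ZMod.intCast_eq_intCast_iff]
    push_cast [cast_liftWord]
    exact h

def generators : Fin 3 → Fin 5 → ZMod 3 :=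
  ![![0,0,0,1,1], ![0,1,2,0,1], ![1,1,1,1,1]]

lemma range_generators : Set.range generators =
    ({![0,0,0,1,1], ![0,1,2,0,1], ![1,1,1,1,1]} : Set (Fin 5 → ZMod 3)) := by
  simp only [generators, Matrix.range_cons, Matrix.range_empty, Set.union_empty,
    Set.singleton_union]

lemma linearIndependent_generators : LinearIndependent (ZMod 3) generators :=
  Fintype.linearIndependent_iff.2 (by decide)

lemma exists_ne_coord_eq_of_mem_span_generators {w : Fin 5 → ZMod 3}
    (hw : w ∈ Submodule.span (ZMod 3) (Set.range generators)) (hw0 : w ≠ 0) :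
    ∃ i j, i ≠ j ∧ w i ≠ 0 ∧ w i = w j := by
  obtain ⟨g, rfl⟩ := (Submodule.mem_span_range_iff_exists_fun _).1 hw
  clear hw
  revert g
  decide

theorem stmt_12 :
    let C := Submodule.span (ZMod 3)
      ({![0,0,0,1,1], ![0,1,2,0,1], ![1,1,1,1,1]} : Set (Fin 5 → ZMod 3))
    Set.ncard (C : Set (Fin 5 → ZMod 3)) = 27 ∧
    (∀ x ∈ C, (x + fun _ => 1) ∈ C) ∧
    (∀ c ∈ C, ∀ d ∈ C, c ≠ d → 2 ≤ asymDelta (liftWord c) (liftWord d)) := by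
  intro C
  rw [show C = Submodule.span (ZMod 3) (Set.range generators) by rw [range_generators]]
  have hone : (fun _ => 1 : Fin 5 → ZMod 3) = generators 2 := by
    funext k; fin_cases k <;> rfl
  refine ⟨?_, fun x hx => add_mem hx (hone ▸ Submodule.subset_span ⟨2, rfl⟩), ?_⟩
  · rw [← Nat.card_coe_set_eq, SetLike.coe_sort_coe, Module.natCard_eq_pow_finrank (K := ZMod 3),
      finrank_span_eq_card linearIndependent_generators]
    simp
  · intro c hc d hd hcd
    obtain ⟨i, j, hij, hi, heq⟩ :=
      exists_ne_coord_eq_of_mem_span_generators (sub_mem hd hc) (sub_ne_zero.2 hcd.symm)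
    exact two_le_asymDelta_liftWord le_rfl hij (fun h => hi (sub_eq_zero.2 h.symm))
      (by simpa using heq)
end

section
/- The code C_{0'} over ℤ_5 of length 5 generated by {(0,0,0,1,1),(0,0,1,0,2),(1,1,1,1,1)} has 125 codewords, is self-complementary, and any two distinct codewords (lifted to {0,...,4}^5) have asymmetric distance Δ ≥ 2. -/
/-!
If `Δ(x, y) ≤ 1` for integer words `x`, `y`, then the positive and negative parts of `y - x` each
sum to at most `1`, so `y - x = u - v` with each of `u`, `v` zero or a standard unit vector.
Reducing mod `q`, two codewords at asymmetric distance `≤ 1` differ by such a vector `u - v`,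
which is again a codeword. For `C_{0'}` a parity-check matrix, whose kernel contains the code,
is nonzero on every nonzero `u - v`, so distinct codewords have `Δ ≥ 2`. The three generators
are linearly independent, giving `5 ^ 3` codewords, and the all-one word is one of them.
-/

open Matrix

def unitOrZero {ι R : Type*} [DecidableEq ι] [Zero R] [One R] : Option ι → ι → R
  | none => 0
  | some i => Pi.single i 1

lemma map_unitOrZero {ι R S : Type*} [DecidableEq ι] [Semiring R] [Semiring S] (f : R →+* S)
    (s : Option ι) (i : ι) : f (unitOrZero s i) = unitOrZero s i := by
  cases s <;> simp [unitOrZero, Pi.single_apply, apply_ite f]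

lemma exists_eq_unitOrZero_of_sum_le_one {ι : Type*} [Fintype ι] [DecidableEq ι] {f : ι → ℤ}
    (hf : ∀ i, 0 ≤ f i) (hsum : ∑ i, f i ≤ 1) : ∃ s, f = unitOrZero s := by
  by_cases hzero : ∀ i, f i = 0
  · exact ⟨none, funext hzero⟩
  obtain ⟨i, hi⟩ := not_forall.mp hzero
  have hpair (j : ι) (hj : j ≠ i) : f i + f j ≤ 1 :=
    calc f i + f j = ∑ k ∈ {i, j}, f k := (Finset.sum_pair hj.symm).symm
      _ ≤ ∑ k, f k :=
        Finset.sum_le_sum_of_subset_of_nonneg (Finset.subset_univ _) fun k _ _ => hf k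
      _ ≤ 1 := hsum
  have hi_le : f i ≤ 1 := (Finset.single_le_sum (fun k _ => hf k) (Finset.mem_univ i)).trans hsum
  refine ⟨some i, funext fun j => ?_⟩
  obtain rfl | hj := eq_or_ne j i
  · simp only [unitOrZero, Pi.single_eq_same]
    have := hf j
    omega
  · simp only [unitOrZero, Pi.single_eq_of_ne hj]
    have := hpair j hj
    have := hf i
    have := hf j
    omega

lemma exists_sub_eq_unitOrZero_sub_of_asymDelta_le_one {n : ℕ} {x y : Fin n → ℤ}
    (h : asymDelta x y ≤ 1) : ∃ s t, y - x = unitOrZero s - unitOrZero t := by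
  obtain ⟨s, hs⟩ := exists_eq_unitOrZero_of_sum_le_one (f := fun i => max (y i - x i) 0)
    (fun _ => le_max_right _ _) (le_of_max_le_left h)
  obtain ⟨t, ht⟩ := exists_eq_unitOrZero_of_sum_le_one (f := fun i => max (x i - y i) 0)
    (fun _ => le_max_right _ _) (le_of_max_le_right h)
  refine ⟨s, t, funext fun i => ?_⟩
  rw [Pi.sub_apply, Pi.sub_apply, ← congr_fun hs i, ← congr_fun ht i]
  omega

lemma exists_sub_eq_unitOrZero_sub_of_asymDelta_liftWord_le_one {q n : ℕ} [NeZero q]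
    {c d : Fin n → ZMod q} (h : asymDelta (liftWord c) (liftWord d) ≤ 1) :
    ∃ s t, d - c = unitOrZero s - unitOrZero t := by
  obtain ⟨s, t, hst⟩ := exists_sub_eq_unitOrZero_sub_of_asymDelta_le_one h
  refine ⟨s, t, funext fun i => ?_⟩
  have := congr_arg (Int.cast : ℤ → ZMod q) (congr_fun hst i)
  simpa [liftWord, ← map_unitOrZero (Int.castRingHom (ZMod q))] using this

lemma two_le_asymDelta_of_unitOrZero_sub_mem {q n : ℕ} [NeZero q]
    (C : AddSubgroup (Fin n → ZMod q))
    (hC : ∀ s t, unitOrZero s - unitOrZero t ∈ C → unitOrZero s = (unitOrZero t : Fin n → ZMod q))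
    {c d : Fin n → ZMod q} (hc : c ∈ C) (hd : d ∈ C) (hne : c ≠ d) :
    2 ≤ asymDelta (liftWord c) (liftWord d) := by
  by_contra! hlt
  obtain ⟨s, t, hst⟩ :=
    exists_sub_eq_unitOrZero_sub_of_asymDelta_liftWord_le_one (Int.lt_add_one_iff.mp hlt)
  have hsub : d - c = 0 := hst.trans (sub_eq_zero.mpr (hC s t (hst ▸ C.sub_mem hd hc)))
  exact hne (sub_eq_zero.mp hsub).symm

theorem ncard_span_eq_pow_card {R M ι : Type*} [Ring R] [AddCommGroup M] [Module R M]
    [Finite ι] {v : ι → M} (hv : LinearIndependent R v) :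
    (Submodule.span R (Set.range v) : Set M).ncard = Nat.card R ^ Nat.card ι := by
  rw [← Nat.card_coe_set_eq, SetLike.coe_sort_coe,
    Nat.card_congr (Module.Basis.span hv).equivFun.toEquiv, Nat.card_fun]

def codeGenerators : Fin 3 → Fin 5 → ZMod 5 := ![![0,0,0,1,1], ![0,0,1,0,2], ![1,1,1,1,1]]

lemma range_codeGenerators :
    Set.range codeGenerators = {![0,0,0,1,1], ![0,0,1,0,2], ![1,1,1,1,1]} := by
  rw [codeGenerators, range_cons, range_cons, range_cons_empty, Set.singleton_union,
    Set.singleton_union]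

lemma linearIndependent_codeGenerators : LinearIndependent (ZMod 5) codeGenerators := by
  rw [Fintype.linearIndependent_iff]
  intro g hg
  have h0 : g 2 = 0 := by simpa [Fin.sum_univ_three, codeGenerators] using congr_fun hg 0
  have h2 : g 1 + g 2 = 0 := by simpa [Fin.sum_univ_three, codeGenerators] using congr_fun hg 2
  have h3 : g 0 + g 2 = 0 := by simpa [Fin.sum_univ_three, codeGenerators] using congr_fun hg 3
  rw [h0, add_zero] at h2 h3
  intro i
  fin_cases i <;> assumption

def parityCheck : Matrix (Fin 2) (Fin 5) (ZMod 5) := !![-1, 1, 0, 0, 0; 2, 0, -2, -1, 1]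

lemma span_codeGenerators_le_ker_parityCheck :
    Submodule.span (ZMod 5) (Set.range codeGenerators) ≤ LinearMap.ker parityCheck.mulVecLin := by
  rw [Submodule.span_le, Set.range_subset_iff]
  intro i
  simp only [SetLike.mem_coe, LinearMap.mem_ker, Matrix.mulVecLin_apply]
  fin_cases i <;> decide

lemma eq_of_parityCheck_mulVec_unitOrZero_sub (s t : Option (Fin 5))
    (h : parityCheck *ᵥ (unitOrZero s - unitOrZero t) = 0) :
    unitOrZero s = (unitOrZero t : Fin 5 → ZMod 5) := by
  revert s t
  decide

theorem stmt_13 :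
    let C := Submodule.span (ZMod 5)
      ({![0,0,0,1,1], ![0,0,1,0,2], ![1,1,1,1,1]} : Set (Fin 5 → ZMod 5))
    Set.ncard (C : Set (Fin 5 → ZMod 5)) = 125 ∧
    (∀ x ∈ C, (x + fun _ => 1) ∈ C) ∧
    (∀ c ∈ C, ∀ d ∈ C, c ≠ d → 2 ≤ asymDelta (liftWord c) (liftWord d)) := by
  intro C
  have hC : C = Submodule.span (ZMod 5) (Set.range codeGenerators) := by
    rw [range_codeGenerators]
  have hone : (fun _ => 1 : Fin 5 → ZMod 5) ∈ C := hC ▸ Submodule.subset_span ⟨2, by decide⟩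
  refine ⟨?_, fun x hx => C.add_mem hx hone, fun c hc d hd hne => ?_⟩
  · rw [hC, ncard_span_eq_pow_card linearIndependent_codeGenerators]
    simp
  · refine two_le_asymDelta_of_unitOrZero_sub_mem C.toAddSubgroup (fun s t hst => ?_) hc hd hne
    exact eq_of_parityCheck_mulVec_unitOrZero_sub s t
      (span_codeGenerators_le_ker_parityCheck (hC ▸ hst))
end
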